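/- The function Λ is finite on the boundary of Ω and satisfies Λ(x) ≤ log(k!) for every x ∈ 𝒫; its maximum value log(k!) over 𝒫 is attained at the extreme points Ā_π (π ∈ Π) of 𝒫. -/

import Mathlib

open Finset

/-- The set Π of injective maps from {1,…,k−1} into {1,…,k}
(the first k−1 values of permutations of {1,…,k}); it has cardinality k!. -/
noncomputable def Pis (k : ℕ) : Finset (Fin (k - 1) → Fin k) :=
  Finset.univ.filter Function.Injective

/-- The averaged cumulant generating function κ. -/
noncomputable def kappa (b k : ℕ) (a : Fin b → Fin k → ℝ) (t : Fin (k - 1) → ℝ) : ℝ :=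
  (b : ℝ)⁻¹ * ∑ i : Fin b, Real.log ((k.factorial : ℝ)⁻¹ *
    ∑ π ∈ Pis k, Real.exp (∑ j : Fin (k - 1), t j * a i (π j)))

/-- The quantity tᵀx − κ(t) whose supremum over t defines Λ(x). -/
noncomputable def lamArg (b k : ℕ) (a : Fin b → Fin k → ℝ) (x t : Fin (k - 1) → ℝ) : ℝ :=
  (∑ j : Fin (k - 1), t j * x j) - kappa b k a t

/-- Λ(x) = sup_t ( tᵀx − κ(t) ), valued in ℝ ∪ {+∞} (EReal). -/
noncomputable def Lam (b k : ℕ) (a : Fin b → Fin k → ℝ) (x : Fin (k - 1) → ℝ) : EReal :=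
  ⨆ t : Fin (k - 1) → ℝ, ((lamArg b k a x t : ℝ) : EReal)

/-- The admissible domain Ω: points x at which the supremum defining Λ(x) is attained. -/
def Omega (b k : ℕ) (a : Fin b → Fin k → ℝ) : Set (Fin (k - 1) → ℝ) :=
  {x | ∃ t : Fin (k - 1) → ℝ, ∀ s : Fin (k - 1) → ℝ, lamArg b k a x s ≤ lamArg b k a x t}

/-- The column means Ā_j of the matrix A. -/
noncomputable def Abar (b k : ℕ) (a : Fin b → Fin k → ℝ) (j : Fin k) : ℝ :=
  (b : ℝ)⁻¹ * ∑ i : Fin b, a i j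

/-- The vertex Ā_π = (Ā_{π(1)}, …, Ā_{π(k−1)}). -/
noncomputable def AbarPi (b k : ℕ) (a : Fin b → Fin k → ℝ) (π : Fin (k - 1) → Fin k) :
    Fin (k - 1) → ℝ :=
  fun j => Abar b k a (π j)

/-- The polytope 𝒫, the convex hull of the points Ā_π for π ∈ Π. -/
noncomputable def PolyP (b k : ℕ) (a : Fin b → Fin k → ℝ) : Set (Fin (k - 1) → ℝ) :=
  convexHull ℝ {x | ∃ π ∈ Pis k, AbarPi b k a π = x}

section Auxiliary

open Filter Topology

lemma descFact_aux (n : ℕ) : (n+1).descFactorial n = (n+1).factorial := by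
  have h := Nat.descFactorial_self (n+1)
  rwa [Nat.descFactorial_succ, Nat.add_sub_cancel_left, one_mul] at h

lemma card_Pis (k : ℕ) (hk : 1 ≤ k) : (Pis k).card = k.factorial := by
  classical
  have h1 : (Pis k).card = Fintype.card {f : Fin (k-1) → Fin k // Function.Injective f} := by
    rw [Fintype.card_subtype]; rfl
  rw [h1, Fintype.card_congr (Equiv.subtypeInjectiveEquivEmbedding (Fin (k-1)) (Fin k)),
    Fintype.card_embedding_eq]
  simp only [Fintype.card_fin]
  obtain ⟨n, rfl⟩ := Nat.exists_eq_add_of_le hk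
  simpa [Nat.add_comm 1 n] using descFact_aux n

lemma Pis_nonempty (k : ℕ) : (Pis k).Nonempty := by
  classical
  refine ⟨fun j => ⟨j, j.2.trans_le (Nat.sub_le k 1)⟩, ?_⟩
  simp only [Pis, mem_filter, mem_univ, true_and]
  intro x y h
  simpa [Fin.ext_iff] using h

lemma mem_Pis_iff {k : ℕ} {π : Fin (k-1) → Fin k} : π ∈ Pis k ↔ Function.Injective π := by
  classical
  simp [Pis]

variable {b k : ℕ} (a : Fin b → Fin k → ℝ)

lemma le_kappa (hb : 1 ≤ b) (t : Fin (k-1) → ℝ) (c : Fin b → (Fin (k-1) → Fin k))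
    (hc : ∀ i, c i ∈ Pis k) :
    (b : ℝ)⁻¹ * ∑ i : Fin b, (∑ j, t j * a i (c i j)) - Real.log (k.factorial) ≤
      kappa b k a t := by
  have hfac : (0:ℝ) < (k.factorial : ℝ) := by positivity
  have hb0 : (0:ℝ) ≤ (b:ℝ)⁻¹ := by positivity
  have key : ∀ i : Fin b, (∑ j, t j * a i (c i j)) - Real.log (k.factorial) ≤
      Real.log ((k.factorial : ℝ)⁻¹ * ∑ π ∈ Pis k, Real.exp (∑ j, t j * a i (π j))) := by
    intro i
    have h1 : Real.exp (∑ j, t j * a i (c i j)) ≤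
        ∑ π ∈ Pis k, Real.exp (∑ j, t j * a i (π j)) := by
      have := Finset.single_le_sum
        (f := fun π : Fin (k-1) → Fin k => Real.exp (∑ j, t j * a i (π j)))
        (s := Pis k) (fun π _ => (Real.exp_pos _).le) (hc i)
      simpa using this
    have h2 : (k.factorial : ℝ)⁻¹ * Real.exp (∑ j, t j * a i (c i j)) ≤
        (k.factorial : ℝ)⁻¹ * ∑ π ∈ Pis k, Real.exp (∑ j, t j * a i (π j)) := by
      apply mul_le_mul_of_nonneg_left h1 (by positivity)
    calc (∑ j, t j * a i (c i j)) - Real.log (k.factorial)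
        = Real.log ((k.factorial : ℝ)⁻¹ * Real.exp (∑ j, t j * a i (c i j))) := by
          rw [Real.log_mul (by positivity) (Real.exp_pos _).ne', Real.log_inv, Real.log_exp]; ring
      _ ≤ _ := Real.log_le_log (by positivity) h2
  calc (b : ℝ)⁻¹ * ∑ i : Fin b, (∑ j, t j * a i (c i j)) - Real.log (k.factorial)
      = (b:ℝ)⁻¹ * ∑ i : Fin b, ((∑ j, t j * a i (c i j)) - Real.log (k.factorial)) := by
        have hbR : (0:ℝ) < (b:ℝ) := by exact_mod_cast hb
        rw [Finset.sum_sub_distrib, Finset.sum_const, Finset.card_fin, nsmul_eq_mul, mul_sub,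
          inv_mul_cancel_left₀ hbR.ne']
    _ ≤ kappa b k a t := by
        unfold kappa
        apply mul_le_mul_of_nonneg_left _ hb0
        exact Finset.sum_le_sum fun i _ => key i

lemma kappa_le (hk : 1 ≤ k) (t : Fin (k-1) → ℝ) :
    ∃ c : Fin b → (Fin (k-1) → Fin k), (∀ i, c i ∈ Pis k) ∧
      kappa b k a t ≤ (b : ℝ)⁻¹ * ∑ i : Fin b, (∑ j, t j * a i (c i j)) := by
  classical
  have hne := Pis_nonempty k
  choose c hc hmax using fun i : Fin b =>
    (Pis k).exists_max_image (fun π => ∑ j, t j * a i (π j)) hne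
  refine ⟨c, hc, ?_⟩
  unfold kappa
  apply mul_le_mul_of_nonneg_left _ (by positivity)
  apply Finset.sum_le_sum
  intro i _
  have hcard : ((Pis k).card : ℝ) = (k.factorial : ℝ) := by rw [card_Pis k hk]
  have h1 : ∑ π ∈ Pis k, Real.exp (∑ j, t j * a i (π j)) ≤
      (k.factorial : ℝ) * Real.exp (∑ j, t j * a i (c i j)) := by
    rw [← hcard]
    calc ∑ π ∈ Pis k, Real.exp (∑ j, t j * a i (π j))
        ≤ ∑ _π ∈ Pis k, Real.exp (∑ j, t j * a i (c i j)) :=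
          Finset.sum_le_sum fun π hπ => Real.exp_le_exp.2 (hmax i π hπ)
      _ = ((Pis k).card : ℝ) * Real.exp (∑ j, t j * a i (c i j)) := by
          rw [Finset.sum_const, nsmul_eq_mul]
  have hfac : (0:ℝ) < (k.factorial : ℝ) := by positivity
  calc Real.log ((k.factorial : ℝ)⁻¹ * ∑ π ∈ Pis k, Real.exp (∑ j, t j * a i (π j)))
      ≤ Real.log ((k.factorial : ℝ)⁻¹ *
          ((k.factorial : ℝ) * Real.exp (∑ j, t j * a i (c i j)))) := by
        apply Real.log_le_log (by positivity)
        exact mul_le_mul_of_nonneg_left h1 (by positivity)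
    _ = ∑ j, t j * a i (c i j) := by
        rw [inv_mul_cancel_left₀ hfac.ne', Real.log_exp]

lemma kappa_zero (hk : 1 ≤ k) : kappa b k a 0 = 0 := by
  unfold kappa
  have h : ∀ i : Fin b, Real.log ((k.factorial : ℝ)⁻¹ *
      ∑ π ∈ Pis k, Real.exp (∑ j : Fin (k-1), (0 : Fin (k-1) → ℝ) j * a i (π j))) = 0 := by
    intro i
    simp only [Pi.zero_apply, zero_mul, Finset.sum_const_zero, Real.exp_zero, Finset.sum_const,
      nsmul_eq_mul, mul_one, card_Pis k hk]
    rw [inv_mul_cancel₀ (by positivity), Real.log_one]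
  rw [Finset.sum_eq_zero fun i _ => h i, mul_zero]

lemma lamArg_zero (hk : 1 ≤ k) (x : Fin (k-1) → ℝ) : lamArg b k a x 0 = 0 := by
  unfold lamArg
  rw [kappa_zero a hk]
  simp

lemma zero_le_Lam (hk : 1 ≤ k) (x : Fin (k-1) → ℝ) : (0 : EReal) ≤ Lam b k a x := by
  have := le_iSup (fun t : Fin (k-1) → ℝ => ((lamArg b k a x t : ℝ) : EReal)) 0
  rwa [lamArg_zero a hk x] at this

/-- The generating set of the big polytope Q. -/
def QGen (b k : ℕ) (a : Fin b → Fin k → ℝ) : Set (Fin (k-1) → ℝ) :=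
  {x | ∃ c : Fin b → (Fin (k-1) → Fin k), (∀ i, c i ∈ Pis k) ∧
    (fun j => (b:ℝ)⁻¹ * ∑ i, a i (c i j)) = x}

/-- The big polytope Q. -/
noncomputable def QSet (b k : ℕ) (a : Fin b → Fin k → ℝ) : Set (Fin (k-1) → ℝ) :=
  convexHull ℝ (QGen b k a)

lemma dot_xc (t : Fin (k-1) → ℝ) (c : Fin b → (Fin (k-1) → Fin k)) :
    ∑ j, t j * ((b:ℝ)⁻¹ * ∑ i, a i (c i j)) =
      (b:ℝ)⁻¹ * ∑ i, ∑ j, t j * a i (c i j) := by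
  have h : ∀ j, t j * ((b:ℝ)⁻¹ * ∑ i, a i (c i j)) =
      ∑ i, (b:ℝ)⁻¹ * (t j * a i (c i j)) := by
    intro j
    rw [Finset.mul_sum, Finset.mul_sum]
    exact Finset.sum_congr rfl fun i _ => by ring
  rw [Finset.sum_congr rfl fun j _ => h j, Finset.sum_comm, Finset.mul_sum]
  exact Finset.sum_congr rfl fun i _ => by rw [Finset.mul_sum]

lemma lamArg_le_on_Q (hb : 1 ≤ b) {x : Fin (k-1) → ℝ} (hx : x ∈ QSet b k a)
    (t : Fin (k-1) → ℝ) : lamArg b k a x t ≤ Real.log (k.factorial) := by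
  have hlin : IsLinearMap ℝ (fun y : Fin (k-1) → ℝ => ∑ j, t j * y j) := by
    constructor
    · intro y z
      simp only [Pi.add_apply, mul_add]
      rw [Finset.sum_add_distrib]
    · intro r y
      simp only [Pi.smul_apply, smul_eq_mul, Finset.mul_sum]
      exact Finset.sum_congr rfl fun j _ => by ring
  have hconv : Convex ℝ {y : Fin (k-1) → ℝ |
      ∑ j, t j * y j ≤ kappa b k a t + Real.log (k.factorial)} :=
    convex_halfSpace_le hlin _
  have hsub : QSet b k a ⊆ {y : Fin (k-1) → ℝ |
      ∑ j, t j * y j ≤ kappa b k a t + Real.log (k.factorial)} := by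
    apply convexHull_min _ hconv
    rintro y ⟨c, hc, rfl⟩
    have := le_kappa a hb t c hc
    have hdot := dot_xc a t c
    simp only [Set.mem_setOf_eq]
    rw [hdot]
    linarith
  have := hsub hx
  simp only [Set.mem_setOf_eq] at this
  unfold lamArg
  linarith

lemma Lam_le_on_Q (hb : 1 ≤ b) {x : Fin (k-1) → ℝ} (hx : x ∈ QSet b k a) :
    Lam b k a x ≤ ((Real.log (k.factorial) : ℝ) : EReal) :=
  iSup_le fun t => EReal.coe_le_coe_iff.2 (lamArg_le_on_Q a hb hx t)

lemma QGen_finite : (QGen b k a).Finite := by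
  apply Set.Finite.subset (Set.finite_range
    (fun c : Fin b → (Fin (k-1) → Fin k) => fun j => (b:ℝ)⁻¹ * ∑ i, a i (c i j)))
  rintro y ⟨c, _, rfl⟩
  exact ⟨c, rfl⟩

lemma QSet_isClosed : IsClosed (QSet b k a) :=
  ((QGen_finite a).isCompact_convexHull ℝ).isClosed

lemma Lam_eq_top_of_not_mem (hb : 1 ≤ b) (hk : 1 ≤ k) {x : Fin (k-1) → ℝ}
    (hx : x ∉ QSet b k a) : Lam b k a x = ⊤ := by
  obtain ⟨f, u, hfu, hux⟩ := geometric_hahn_banach_closed_point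
    (convex_convexHull ℝ (QGen b k a)) (QSet_isClosed a) hx
  set t : Fin (k-1) → ℝ := fun j => f (Pi.single j 1) with ht
  have hf : ∀ y : Fin (k-1) → ℝ, ∑ j, t j * y j = f y := by
    intro y
    have hy : y = ∑ j, y j • (Pi.single j (1:ℝ) : Fin (k-1) → ℝ) := by
      have h1 : ∀ j : Fin (k-1), y j • (Pi.single j (1:ℝ) : Fin (k-1) → ℝ) =
          Pi.single j (y j) := by
        intro j
        rw [← Pi.single_smul, smul_eq_mul, mul_one]
      rw [Finset.sum_congr rfl fun j _ => h1 j, Finset.univ_sum_single]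
    conv_rhs => rw [hy]
    rw [map_sum]
    exact Finset.sum_congr rfl fun j _ => by rw [map_smul, smul_eq_mul, ht]; ring
  -- the key growth estimate
  have key : ∀ n : ℕ, (n:ℝ) * (f x - u) ≤ lamArg b k a x ((n:ℝ) • t) := by
    intro n
    obtain ⟨c, hc, hkap⟩ := kappa_le a hk ((n:ℝ) • t)
    set y : Fin (k-1) → ℝ := fun j => (b:ℝ)⁻¹ * ∑ i, a i (c i j) with hy
    have hyQ : y ∈ QSet b k a := subset_convexHull ℝ _ ⟨c, hc, rfl⟩
    have hyu : f y < u := hfu y hyQ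
    have hsm : (b:ℝ)⁻¹ * ∑ i : Fin b, ∑ j, ((n:ℝ) • t) j * a i (c i j)
        = (n:ℝ) * ((b:ℝ)⁻¹ * ∑ i : Fin b, ∑ j, t j * a i (c i j)) := by
      simp only [Pi.smul_apply, smul_eq_mul, mul_assoc]
      simp_rw [← Finset.mul_sum]
      ring
    have h1 : (b : ℝ)⁻¹ * ∑ i : Fin b, (∑ j, ((n:ℝ) • t) j * a i (c i j)) = (n:ℝ) * f y := by
      rw [hsm, ← dot_xc a t c, hf y]
    have hkap2 : kappa b k a ((n:ℝ) • t) ≤ (n:ℝ) * u := by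
      calc kappa b k a ((n:ℝ) • t) ≤ (n:ℝ) * f y := by rw [← h1]; exact hkap
        _ ≤ (n:ℝ) * u := by
            apply mul_le_mul_of_nonneg_left hyu.le (Nat.cast_nonneg n)
    have hdotx : ∑ j, ((n:ℝ) • t) j * x j = (n:ℝ) * f x := by
      rw [← hf x, Finset.mul_sum]
      exact Finset.sum_congr rfl fun j _ => by simp [mul_assoc]
    unfold lamArg
    rw [hdotx]
    nlinarith [hkap2]
  rw [Lam, iSup_eq_top]
  intro cE hcE
  obtain ⟨r, hcr, -⟩ := EReal.exists_between_coe_real hcE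
  have hpos : 0 < f x - u := by linarith
  obtain ⟨n, hn⟩ := exists_nat_gt (r / (f x - u))
  refine ⟨(n:ℝ) • t, hcr.trans ?_⟩
  rw [EReal.coe_lt_coe_iff]
  have : r < (n:ℝ) * (f x - u) := by
    rw [div_lt_iff₀ hpos] at hn
    linarith
  exact this.trans_le (key n)

lemma Omega_subset_QSet (hb : 1 ≤ b) (hk : 1 ≤ k) : Omega b k a ⊆ QSet b k a := by
  intro x hx
  by_contra hxQ
  obtain ⟨t0, hmax⟩ := hx
  have h1 : Lam b k a x ≤ ((lamArg b k a x t0 : ℝ) : EReal) :=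
    iSup_le fun s => EReal.coe_le_coe_iff.2 (hmax s)
  rw [Lam_eq_top_of_not_mem a hb hk hxQ] at h1
  exact (EReal.coe_ne_top _) (top_le_iff.1 h1)

def extFun (k : ℕ) (π : Fin (k-1) → Fin k) (m : Fin k) : Fin k → Fin k :=
  fun c => if h : (c : ℕ) < k - 1 then π ⟨(c:ℕ), h⟩ else m

lemma extFun_injective {k : ℕ} {π : Fin (k-1) → Fin k} {m : Fin k}
    (hπ : Function.Injective π) (hm : ∀ j, π j ≠ m) :
    Function.Injective (extFun k π m) := by
  intro c₁ c₂ h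
  unfold extFun at h
  split_ifs at h with h₁ h₂ h₂
  · have := hπ h
    rw [Fin.ext_iff] at this ⊢
    simpa using this
  · exact absurd h (hm _)
  · exact absurd h.symm (hm _)
  · have e1 : (c₁ : ℕ) = k - 1 := by omega
    have e2 : (c₂ : ℕ) = k - 1 := by omega
    rw [Fin.ext_iff, e1, e2]

lemma perm_eq_refl_of_le {k : ℕ} (ρ : Equiv.Perm (Fin k)) (h : ∀ d, ρ d ≤ d) :
    ∀ d, ρ d = d := by
  have hsum : ∑ d : Fin k, ((ρ d : ℕ)) = ∑ d : Fin k, (d : ℕ) :=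
    Equiv.sum_comp ρ (fun d => (d : ℕ))
  have := (Finset.sum_eq_sum_iff_of_le (f := fun d : Fin k => ((ρ d : ℕ)))
    (g := fun d : Fin k => (d : ℕ)) (fun d _ => h d)).1 hsum
  intro d
  exact Fin.ext (this d (Finset.mem_univ d))

lemma sum_extFun {k : ℕ} (hk : 1 ≤ k) (π τ : Fin (k-1) → Fin k) (m m' : Fin k)
    (f : Fin k → ℝ) :
    ∑ c : Fin k, (((extFun k π m c : ℕ) : ℝ) - ((m:ℕ):ℝ)) * f (extFun k τ m' c)
      = ∑ j : Fin (k-1), (((π j : ℕ):ℝ) - ((m:ℕ):ℝ)) * f (τ j) := by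
  have hkk : k - 1 + 1 = k := Nat.succ_pred_eq_of_pos hk
  rw [← Fin.sum_congr' (fun c : Fin k =>
      (((extFun k π m c : ℕ) : ℝ) - ((m:ℕ):ℝ)) * f (extFun k τ m' c)) hkk,
    Fin.sum_univ_castSucc]
  have hlast : ((Fin.cast hkk (Fin.last (k-1)) : Fin k) : ℕ) = k - 1 := rfl
  have hlast2 : extFun k π m (Fin.cast hkk (Fin.last (k-1))) = m := by
    unfold extFun
    rw [dif_neg]
    omega
  rw [hlast2]
  simp only [sub_self, zero_mul, add_zero]
  apply Finset.sum_congr rfl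
  intro j _
  have hj : ((Fin.cast hkk (Fin.castSucc j) : Fin k) : ℕ) = (j : ℕ) := rfl
  have h1 : extFun k π m (Fin.cast hkk (Fin.castSucc j)) = π j := by
    unfold extFun
    rw [dif_pos (by rw [hj]; exact j.2)]
    congr 1
  have h2 : extFun k τ m' (Fin.cast hkk (Fin.castSucc j)) = τ j := by
    unfold extFun
    rw [dif_pos (by rw [hj]; exact j.2)]
    congr 1
  rw [h1, h2]

lemma rearrange_main {k : ℕ} (hk : 1 ≤ k) (π π' : Fin (k-1) → Fin k)
    (hπ : Function.Injective π) (hπ' : Function.Injective π') (hne : π' ≠ π)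
    (m m' : Fin k) (hm : ∀ j, π j ≠ m) (hm' : ∀ j, π' j ≠ m')
    (f : Fin k → ℝ) (hf : StrictMono f) :
    ∑ j, (((π j : ℕ) : ℝ) - ((m : ℕ) : ℝ)) * f (π' j) <
      ∑ j, (((π j : ℕ) : ℝ) - ((m : ℕ) : ℝ)) * f (π j) := by
  classical
  set e : Fin k → Fin k := extFun k π m with he
  set e' : Fin k → Fin k := extFun k π' m' with he'
  have hebij : Function.Bijective e :=
    Finite.injective_iff_bijective.1 (extFun_injective hπ hm)
  have he'bij : Function.Bijective e' :=
    Finite.injective_iff_bijective.1 (extFun_injective hπ' hm')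
  set σ : Equiv.Perm (Fin k) := Equiv.ofBijective e hebij with hσ
  set σ' : Equiv.Perm (Fin k) := Equiv.ofBijective e' he'bij with hσ'
  set ρ : Equiv.Perm (Fin k) := σ.symm.trans σ' with hρ
  have hρne : ∃ d, ρ d ≠ d := by
    by_contra hcon
    push_neg at hcon
    apply hne
    funext j
    have hj2 : (j : ℕ) < k - 1 := j.2
    have hιlt : ((⟨(j:ℕ), lt_of_lt_of_le hj2 (Nat.sub_le k 1)⟩ : Fin k) : ℕ) < k - 1 := hj2
    set ι : Fin k := ⟨(j:ℕ), lt_of_lt_of_le hj2 (Nat.sub_le k 1)⟩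
    have h1 : σ' (σ.symm (σ ι)) = σ ι := hcon (σ ι)
    rw [Equiv.symm_apply_apply] at h1
    have h2 : e' ι = e ι := h1
    have h3 : e ι = π j := by
      rw [he]; unfold extFun; rw [dif_pos hιlt]
    have h4 : e' ι = π' j := by
      rw [he']; unfold extFun; rw [dif_pos hιlt]
    rw [h3, h4] at h2
    exact h2
  -- rearrangement inequality
  have hw : Monovary (fun d : Fin k => ((d : ℕ) : ℝ)) f := by
    intro i j hij
    have : i < j := hf.lt_iff_lt.1 hij
    exact_mod_cast Nat.cast_le.2 (le_of_lt this)
  have hkey : ∑ d : Fin k, ((d : ℕ) : ℝ) * f (ρ d) < ∑ d : Fin k, ((d : ℕ) : ℝ) * f d := by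
    rw [hw.sum_mul_comp_perm_lt_sum_mul_iff]
    intro hM
    obtain ⟨d₀, hd₀⟩ := hρne
    -- Monovary w (f ∘ ρ) means: ρ i < ρ j → i ≤ j, so ρ.symm strictmono, so ρ d ≤ d ∀ d
    have hmono : StrictMono (fun d => ρ.symm d) := by
      intro i j hij
      have h1 : ρ (ρ.symm i) < ρ (ρ.symm j) := by
        rw [Equiv.apply_symm_apply, Equiv.apply_symm_apply]; exact hij
      have h2 : ((ρ.symm i : ℕ) : ℝ) ≤ ((ρ.symm j : ℕ) : ℝ) := by
        apply hM
        simp only [Function.comp_apply]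
        exact hf h1
      have h3 : ρ.symm i ≤ ρ.symm j := by
        rw [Fin.le_def]; exact_mod_cast h2
      rcases lt_or_eq_of_le h3 with h | h
      · exact h
      · exfalso
        have : i = j := by
          have := congrArg ρ h
          rwa [Equiv.apply_symm_apply, Equiv.apply_symm_apply] at this
        exact absurd this (ne_of_lt hij)
    have hle : ∀ d, ρ d ≤ d := by
      intro d
      haveI : WellFoundedLT (Fin k) := Finite.to_wellFoundedLT
      have := hmono.le_apply (x := ρ d)
      simpa using this
    exact hd₀ (perm_eq_refl_of_le ρ hle d₀)
  -- assemble
  have hsplit : ∀ (g : Fin k → ℝ), ∑ d : Fin k, (((d:ℕ):ℝ) - ((m:ℕ):ℝ)) * g d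
      = (∑ d : Fin k, ((d:ℕ):ℝ) * g d) - ((m:ℕ):ℝ) * ∑ d : Fin k, g d := by
    intro g
    rw [Finset.mul_sum, ← Finset.sum_sub_distrib]
    exact Finset.sum_congr rfl fun d _ => by ring
  have hρf : ∑ d : Fin k, f (ρ d) = ∑ d : Fin k, f d := Equiv.sum_comp ρ f
  have hre1 : ∑ c : Fin k, (((e c : ℕ) : ℝ) - ((m:ℕ):ℝ)) * f (e' c)
      = ∑ d : Fin k, (((d:ℕ):ℝ) - ((m:ℕ):ℝ)) * f (ρ d) := by
    rw [← Equiv.sum_comp σ (fun d : Fin k => (((d:ℕ):ℝ) - ((m:ℕ):ℝ)) * f (ρ d))]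
    apply Finset.sum_congr rfl
    intro c _
    have h2 : ρ (σ c) = e' c := by
      show σ' ((Equiv.symm σ) (σ c)) = e' c
      rw [Equiv.symm_apply_apply]
      rfl
    rw [h2]
    rfl
  have hre2 : ∑ c : Fin k, (((e c : ℕ) : ℝ) - ((m:ℕ):ℝ)) * f (e c)
      = ∑ d : Fin k, (((d:ℕ):ℝ) - ((m:ℕ):ℝ)) * f d := by
    rw [← Equiv.sum_comp σ (fun d : Fin k => (((d:ℕ):ℝ) - ((m:ℕ):ℝ)) * f d)]
    rfl
  calc ∑ j, (((π j : ℕ) : ℝ) - ((m : ℕ) : ℝ)) * f (π' j)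
      = ∑ c : Fin k, (((e c : ℕ) : ℝ) - ((m:ℕ):ℝ)) * f (e' c) :=
        (sum_extFun hk π π' m m' f).symm
    _ = ∑ d : Fin k, (((d:ℕ):ℝ) - ((m:ℕ):ℝ)) * f (ρ d) := hre1
    _ = (∑ d : Fin k, ((d:ℕ):ℝ) * f (ρ d)) - ((m:ℕ):ℝ) * ∑ d : Fin k, f (ρ d) := hsplit _
    _ < (∑ d : Fin k, ((d:ℕ):ℝ) * f d) - ((m:ℕ):ℝ) * ∑ d : Fin k, f d := by
        rw [hρf]
        have := hkey
        linarith
    _ = ∑ d : Fin k, (((d:ℕ):ℝ) - ((m:ℕ):ℝ)) * f d := (hsplit f).symm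
    _ = ∑ c : Fin k, (((e c : ℕ) : ℝ) - ((m:ℕ):ℝ)) * f (e c) := hre2.symm
    _ = ∑ j, (((π j : ℕ) : ℝ) - ((m : ℕ) : ℝ)) * f (π j) := sum_extFun hk π π m m f


lemma exists_not_mem_range {k : ℕ} (hk : 1 ≤ k) (π : Fin (k-1) → Fin k) :
    ∃ m : Fin k, ∀ j, π j ≠ m := by
  have hns : ¬ Function.Surjective π := by
    intro hs
    have := Fintype.card_le_of_surjective π hs
    simp only [Fintype.card_fin] at this
    omega
  rw [Function.Surjective] at hns
  push_neg at hns
  obtain ⟨m, hm⟩ := hns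
  exact ⟨m, hm⟩

lemma lamArg_AbarPi {b k : ℕ} (a : Fin b → Fin k → ℝ) (hb : 1 ≤ b)
    (π : Fin (k-1) → Fin k) (u : Fin (k-1) → ℝ) :
    lamArg b k a (AbarPi b k a π) u = Real.log (k.factorial) -
      (b:ℝ)⁻¹ * ∑ i : Fin b, Real.log (∑ π' ∈ Pis k,
        Real.exp ((∑ j, u j * a i (π' j)) - ∑ j, u j * a i (π j))) := by
  have hbR : (0:ℝ) < (b:ℝ) := by exact_mod_cast hb
  have hpos : ∀ i : Fin b, (0:ℝ) < ∑ π' ∈ Pis k,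
      Real.exp ((∑ j, u j * a i (π' j)) - ∑ j, u j * a i (π j)) :=
    fun i => Finset.sum_pos (fun _ _ => Real.exp_pos _) (Pis_nonempty k)
  have hlog : ∀ i : Fin b,
      Real.log ((k.factorial:ℝ)⁻¹ * ∑ π' ∈ Pis k, Real.exp (∑ j, u j * a i (π' j)))
      = -Real.log (k.factorial) + ((∑ j, u j * a i (π j)) +
        Real.log (∑ π' ∈ Pis k,
          Real.exp ((∑ j, u j * a i (π' j)) - ∑ j, u j * a i (π j)))) := by
    intro i
    have hfac : ∑ π' ∈ Pis k, Real.exp (∑ j, u j * a i (π' j))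
        = Real.exp (∑ j, u j * a i (π j)) * ∑ π' ∈ Pis k,
          Real.exp ((∑ j, u j * a i (π' j)) - ∑ j, u j * a i (π j)) := by
      rw [Finset.mul_sum]
      apply Finset.sum_congr rfl
      intro π' _
      rw [← Real.exp_add]
      congr 1
      ring
    have hfacpos : (0:ℝ) < (k.factorial:ℝ) := by positivity
    rw [hfac, Real.log_mul (inv_ne_zero hfacpos.ne')
        (mul_ne_zero (Real.exp_pos _).ne' (hpos i).ne'),
      Real.log_mul (Real.exp_pos _).ne' (hpos i).ne', Real.log_inv, Real.log_exp]
  have hswap : ∑ j, u j * AbarPi b k a π j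
      = (b:ℝ)⁻¹ * ∑ i : Fin b, ∑ j, u j * a i (π j) := by
    have := dot_xc a u (fun _ : Fin b => π)
    simpa [AbarPi, Abar] using this
  have hkap : kappa b k a u = (b:ℝ)⁻¹ * ((b:ℝ) * (-Real.log (k.factorial)) +
      ((∑ i : Fin b, ∑ j, u j * a i (π j)) + ∑ i : Fin b, Real.log (∑ π' ∈ Pis k,
        Real.exp ((∑ j, u j * a i (π' j)) - ∑ j, u j * a i (π j))))) := by
    unfold kappa
    rw [Finset.sum_congr rfl fun i _ => hlog i, Finset.sum_add_distrib,
      Finset.sum_add_distrib, Finset.sum_const, Finset.card_fin, nsmul_eq_mul]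
  unfold lamArg
  rw [hswap, hkap]
  field_simp
  ring

end Auxiliary

/-- Λ is finite on the boundary of Ω, Λ ≤ log k! on 𝒫, and the maximum
value log k! over 𝒫 is attained at the extreme points Ā_π (π ∈ Π). -/
theorem stmt_5 (b k : ℕ) (hb : 1 ≤ b) (hk : 2 ≤ k) (a : Fin b → Fin k → ℝ)
    (ha : ∀ i : Fin b, StrictMono (a i)) :
    (∀ x ∈ frontier (Omega b k a), Lam b k a x ≠ ⊤ ∧ Lam b k a x ≠ ⊥) ∧
    (∀ x ∈ PolyP b k a, Lam b k a x ≤ ((Real.log (k.factorial) : ℝ) : EReal)) ∧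
    (∀ π ∈ Pis k, Lam b k a (AbarPi b k a π) = ((Real.log (k.factorial) : ℝ) : EReal)) := by
  have hk1 : 1 ≤ k := le_trans (by norm_num) hk
  have hPsub : PolyP b k a ⊆ QSet b k a := by
    apply convexHull_mono
    rintro x ⟨π, hπ, rfl⟩
    exact ⟨fun _ => π, fun _ => hπ, rfl⟩
  refine ⟨?_, ?_, ?_⟩
  · intro x hx
    have hxQ : x ∈ QSet b k a := by
      have h1 : x ∈ closure (Omega b k a) := hx.1
      have h2 : closure (Omega b k a) ⊆ QSet b k a :=
        closure_minimal (Omega_subset_QSet a hb hk1) (QSet_isClosed a)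
      exact h2 h1
    constructor
    · intro htop
      have := Lam_le_on_Q a hb hxQ
      rw [htop] at this
      exact (EReal.coe_ne_top _) (top_le_iff.1 this)
    · intro hbot
      have := zero_le_Lam a hk1 x
      rw [hbot] at this
      simp at this
  · intro x hx
    exact Lam_le_on_Q a hb (hPsub hx)
  · intro π hπ
    have hπinj : Function.Injective π := mem_Pis_iff.1 hπ
    obtain ⟨m, hm⟩ := exists_not_mem_range hk1 π
    set t : Fin (k-1) → ℝ := fun j => (((π j : ℕ):ℝ) - ((m:ℕ):ℝ)) with ht
    have hstrict : ∀ (i : Fin b) (π' : Fin (k-1) → Fin k), π' ∈ Pis k → π' ≠ π →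
        (∑ j, t j * a i (π' j)) < ∑ j, t j * a i (π j) := by
      intro i π' hπ' hne
      obtain ⟨m', hm'⟩ := exists_not_mem_range hk1 π'
      exact rearrange_main hk1 π π' hπinj (mem_Pis_iff.1 hπ') hne m m' hm hm' (a i) (ha i)
    have hub : Lam b k a (AbarPi b k a π) ≤ ((Real.log (k.factorial) : ℝ) : EReal) :=
      Lam_le_on_Q a hb (hPsub (subset_convexHull ℝ _ ⟨π, hπ, rfl⟩))
    have hform : ∀ n : ℕ, lamArg b k a (AbarPi b k a π) ((n:ℝ) • t)
        = Real.log (k.factorial) - (b:ℝ)⁻¹ * ∑ i : Fin b, Real.log (∑ π' ∈ Pis k,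
            Real.exp ((n:ℝ) * ((∑ j, t j * a i (π' j)) - ∑ j, t j * a i (π j)))) := by
      intro n
      rw [lamArg_AbarPi a hb π ((n:ℝ) • t)]
      congr 2
      apply Finset.sum_congr rfl; intro i _
      congr 1
      apply Finset.sum_congr rfl; intro π' _
      congr 1
      simp only [Pi.smul_apply, smul_eq_mul, mul_assoc]
      rw [← Finset.mul_sum, ← Finset.mul_sum]
      ring
    have hinner : ∀ i : Fin b, Filter.Tendsto (fun n : ℕ => Real.log (∑ π' ∈ Pis k,
        Real.exp ((n:ℝ) * ((∑ j, t j * a i (π' j)) - ∑ j, t j * a i (π j)))))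
        Filter.atTop (nhds 0) := by
      intro i
      have hsum : Filter.Tendsto (fun n : ℕ => ∑ π' ∈ Pis k,
          Real.exp ((n:ℝ) * ((∑ j, t j * a i (π' j)) - ∑ j, t j * a i (π j))))
          Filter.atTop (nhds (∑ π' ∈ Pis k, if π' = π then (1:ℝ) else 0)) := by
        apply tendsto_finset_sum
        intro π' hπ'
        by_cases h : π' = π
        · subst h
          simp only [sub_self, mul_zero, Real.exp_zero, if_pos rfl]
          exact tendsto_const_nhds
        · simp only [if_neg h]
          have hneg : (∑ j, t j * a i (π' j)) - ∑ j, t j * a i (π j) < 0 :=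
            sub_neg.2 (hstrict i π' hπ' h)
          have h1 : Filter.Tendsto (fun n : ℕ =>
              (n:ℝ) * ((∑ j, t j * a i (π' j)) - ∑ j, t j * a i (π j)))
              Filter.atTop Filter.atBot :=
            tendsto_natCast_atTop_atTop.atTop_mul_const_of_neg hneg
          exact Real.tendsto_exp_atBot.comp h1
      have h1 : (∑ π' ∈ Pis k, if π' = π then (1:ℝ) else 0) = 1 := by
        rw [Finset.sum_ite_eq' (Pis k) π (fun _ => (1:ℝ))]
        simp [hπ]
      rw [h1] at hsum
      have := hsum.log one_ne_zero
      simpa using this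
    have hsum0 : Filter.Tendsto (fun n : ℕ => ∑ i : Fin b, Real.log (∑ π' ∈ Pis k,
        Real.exp ((n:ℝ) * ((∑ j, t j * a i (π' j)) - ∑ j, t j * a i (π j)))))
        Filter.atTop (nhds 0) := by
      have := tendsto_finset_sum Finset.univ (fun i _ => hinner i)
      simpa using this
    have hlim : Filter.Tendsto (fun n : ℕ => lamArg b k a (AbarPi b k a π) ((n:ℝ) • t))
        Filter.atTop (nhds (Real.log (k.factorial))) := by
      rw [funext hform]
      have h2 := tendsto_const_nhds (x := Real.log (k.factorial))
        (f := Filter.atTop (α := ℕ)) |>.sub (hsum0.const_mul ((b:ℝ)⁻¹))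
      simpa using h2
    have hlb : ((Real.log (k.factorial) : ℝ) : EReal) ≤ Lam b k a (AbarPi b k a π) := by
      have hlimE : Filter.Tendsto (fun n : ℕ =>
          ((lamArg b k a (AbarPi b k a π) ((n:ℝ) • t) : ℝ) : EReal))
          Filter.atTop (nhds ((Real.log (k.factorial) : ℝ) : EReal)) :=
        EReal.tendsto_coe.2 hlim
      exact le_of_tendsto' hlimE fun n =>
        le_iSup (fun s : Fin (k-1) → ℝ => ((lamArg b k a (AbarPi b k a π) s : ℝ) : EReal))
          ((n:ℝ) • t)
    exact le_antisymm hub hlb
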